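/- arXiv:math/0309090 — 2 statements merged into one kernel-verified Lean document; each statement's English description precedes it below -/
import Mathlib

section
/- Let p be an odd prime, F a field containing a primitive p-th root of unity, K/F cyclic of degree p with Galois group generated by σ, J = K^×/K^{×p}, and e: J_{p-1} → F_p the index homomorphism. Then for every [γ] ∈ J with [γ]^{σ-1} ∈ J_{p-1}, one has e([γ]^{σ-1}) = 0; i.e., e vanishes on the image of σ - 1. -/
/-
The norm of `σ(γ)/γ` is `1`, so `1` is a `p`-th root of it; since `σ` fixes `1`, the defining
relation `σ(r) = ξ^{e} r` for `r = 1` forces `ξ^{e} = 1`, i.e. `e = 0` because `ξ` is primitive.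
-/

noncomputable section

/-- The subgroup of `p`-th powers in `K^×`. -/
def pthPowers (p : ℕ) (K : Type) [Field K] : Subgroup Kˣ :=
  (powMonoidHom p : Kˣ →* Kˣ).range

instance (p : ℕ) (K : Type) [Field K] : (pthPowers p K).Normal :=
  Subgroup.normal_of_comm _

/-- The `𝔽_p[Gal(K/F)]`-module `J = K^×/K^{×p}` (written multiplicatively). -/
abbrev Jmod (p : ℕ) (K : Type) [Field K] := Kˣ ⧸ pthPowers p K

/-- The class `[γ] ∈ J` of `γ ∈ K^×`. -/
def mkJ (p : ℕ) (K : Type) [Field K] : Kˣ →* Jmod p K := QuotientGroup.mk' _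

/-- The action of an `F`-automorphism `σ` of `K` on `K^×`. -/
def sigU (p : ℕ) (K : Type) [Field K] (F : Type) [Field F] [Algebra F K]
    (σ : K ≃ₐ[F] K) : Kˣ →* Kˣ :=
  Units.map (σ.toAlgHom.toRingHom.toMonoidHom)

/-- The action of `σ` on `J = K^×/K^{×p}`. -/
def sigJ (p : ℕ) (K : Type) [Field K] (F : Type) [Field F] [Algebra F K]
    (σ : K ≃ₐ[F] K) : Jmod p K →* Jmod p K :=
  QuotientGroup.map _ _ (sigU p K F σ) (by
    rintro x ⟨y, rfl⟩
    exact ⟨sigU p K F σ y, by simp [powMonoidHom, map_pow]⟩)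

/-- The action of `σ - 1` on the multiplicative module `J`: `x ↦ σ(x)·x⁻¹`. -/
def rhoJ (p : ℕ) (K : Type) [Field K] (F : Type) [Field F] [Algebra F K]
    (σ : K ≃ₐ[F] K) : Jmod p K →* Jmod p K :=
  MonoidHom.mk' (fun x => sigJ p K F σ x * x⁻¹) (by
    intro a b
    try simp only []
    rw [map_mul, mul_inv_rev, mul_comm (b⁻¹) (a⁻¹)]
    exact mul_mul_mul_comm (sigJ p K F σ a) (sigJ p K F σ b) a⁻¹ b⁻¹)

/-- The action of `(σ - 1)^n` on `J`. -/
def rhoPowJ (p : ℕ) (K : Type) [Field K] (F : Type) [Field F] [Algebra F K]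
    (σ : K ≃ₐ[F] K) : ℕ → (Jmod p K →* Jmod p K)
  | 0 => MonoidHom.id _
  | n + 1 => (rhoJ p K F σ).comp (rhoPowJ p K F σ n)

end

theorem IsPrimitiveRoot.pow_val_eq_one_iff {M : Type*} [CommMonoid M] {ζ : M} {n : ℕ}
    (hζ : IsPrimitiveRoot ζ n) (x : ZMod n) : ζ ^ x.val = 1 ↔ x = 0 := by
  rw [hζ.pow_eq_one_iff_dvd]
  rcases n with _ | n
  · simp only [Nat.zero_dvd, ZMod.val_eq_zero]
  · rw [← ZMod.natCast_eq_zero_iff, ZMod.natCast_zmod_val]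

theorem Algebra.norm_algEquiv_apply_mul_inv {F K : Type*} [Field F] [Field K] [Algebra F K]
    (σ : K ≃ₐ[F] K) {x : K} (hx : x ≠ 0) : Algebra.norm F (σ x * x⁻¹) = 1 := by
  rw [map_mul, Algebra.norm_eq_of_algEquiv, ← map_mul, mul_inv_cancel₀ hx, map_one]

theorem rhoJ_mkJ (p : ℕ) (K : Type) [Field K] (F : Type) [Field F] [Algebra F K]
    (σ : K ≃ₐ[F] K) (γ : Kˣ) :
    rhoJ p K F σ (mkJ p K γ) = mkJ p K (sigU p K F σ γ * γ⁻¹) :=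
  rfl

theorem stmt_9_general (p : ℕ)
    (F K : Type) [Field F] [Field K] [Algebra F K]
    (xi : F) (hxi : IsPrimitiveRoot xi p)
    (sigma : K ≃ₐ[F] K) :
    ∀ e : ↥((rhoPowJ p K F sigma (p - 1)).ker) →* Multiplicative (ZMod p),
      (∀ (γ : Kˣ) (hγ : mkJ p K γ ∈ (rhoPowJ p K F sigma (p - 1)).ker) (r : K),
        r ≠ 0 → r ^ p = algebraMap F K (Algebra.norm F (γ : K)) →
        sigma r = algebraMap F K xi ^ (Multiplicative.toAdd (e ⟨mkJ p K γ, hγ⟩)).val * r) →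
      ∀ (γ : Kˣ) (hmem : rhoJ p K F sigma (mkJ p K γ) ∈ (rhoPowJ p K F sigma (p - 1)).ker),
        e ⟨rhoJ p K F sigma (mkJ p K γ), hmem⟩ = 1 := by
  intro e he γ hmem
  set δ : Kˣ := sigU p K F sigma γ * γ⁻¹
  have hδ : mkJ p K δ ∈ (rhoPowJ p K F sigma (p - 1)).ker := rhoJ_mkJ p K F sigma γ ▸ hmem
  have hnorm : Algebra.norm F (δ : K) = 1 := by
    simp only [δ, sigU, Units.val_mul, Units.coe_map, Units.val_inv_eq_inv_val]
    exact Algebra.norm_algEquiv_apply_mul_inv sigma γ.ne_zero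
  have hfix := he δ hδ 1 one_ne_zero (by rw [one_pow, hnorm, map_one])
  rw [map_one, mul_one, ← map_pow, eq_comm, map_eq_one_iff _ (algebraMap F K).injective,
    hxi.pow_val_eq_one_iff] at hfix
  exact Multiplicative.toAdd.injective hfix

/-- The index homomorphism `e : J_{p-1} → 𝔽_p` (characterized by
`ξ^{e([γ])} = σ(N(γ)^{1/p})/N(γ)^{1/p}`) vanishes on the image of `σ - 1`:
for every `[γ] ∈ J` with `[γ]^{σ-1} ∈ J_{p-1}`, `e([γ]^{σ-1}) = 0` (i.e. the value is the
identity of `Multiplicative (ZMod p)`). -/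
theorem stmt_9 (p : ℕ) [Fact p.Prime] (hp2 : Odd p)
    (F K : Type) [Field F] [Field K] [Algebra F K]
    (xi : F) (hxi : IsPrimitiveRoot xi p)
    (a : Fˣ) (alpha : K) (halpha : alpha ^ p = algebraMap F K a)
    (hadj : Algebra.adjoin F {alpha} = ⊤)
    (hdeg : Module.finrank F K = p)
    (sigma : K ≃ₐ[F] K) (hgen : ∀ eta : K ≃ₐ[F] K, eta ∈ Subgroup.zpowers sigma) :
    ∀ e : ↥((rhoPowJ p K F sigma (p - 1)).ker) →* Multiplicative (ZMod p),
      (∀ (γ : Kˣ) (hγ : mkJ p K γ ∈ (rhoPowJ p K F sigma (p - 1)).ker) (r : K),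
        r ≠ 0 → r ^ p = algebraMap F K (Algebra.norm F (γ : K)) →
        sigma r = algebraMap F K xi ^ (Multiplicative.toAdd (e ⟨mkJ p K γ, hγ⟩)).val * r) →
      ∀ (γ : Kˣ) (hmem : rhoJ p K F sigma (mkJ p K γ) ∈ (rhoPowJ p K F sigma (p - 1)).ker),
        e ⟨rhoJ p K F sigma (mkJ p K γ), hmem⟩ = 1 :=
  stmt_9_general p F K xi hxi sigma
end

section
/- Let p be a prime, F a field containing a primitive p-th root of unity, K/F cyclic of degree p with group G, and J = K^×/K^{×p} as F_p[G]-module. There is an exact sequence 0 → ⟨[a]⟩ → F^×/F^{×p} → J_1 → ⟨[a]⟩ where ⟨[a]⟩ ⊆ F^×/F^{×p} is generated by the class of a (where K = F(a^{1/p})), the second map is induced by inclusion F^× ⊆ K^×, J_1 is the G-fixed part of J, and the last map is induced by the norm N_{K/F}. Consequently, if [γ] ∈ J_1 is fixed by G and N_{K/F}(γ) ∈ a^{pZ}·F^{×p}, then [γ] = [f] in J for some f ∈ F^×. -/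
noncomputable section

/-- The map `F^×/F^{×p} → K^×/K^{×p}` induced by the inclusion `F^× ⊆ K^×`. -/
def epsJ (p : ℕ) (F K : Type) [Field F] [Field K] [Algebra F K] :
    Jmod p F →* Jmod p K :=
  QuotientGroup.map _ _ (Units.map (algebraMap F K).toMonoidHom) (by
    rintro x ⟨y, rfl⟩
    exact ⟨Units.map (algebraMap F K).toMonoidHom y, by simp [powMonoidHom, map_pow]⟩)

/-- The map `K^×/K^{×p} → F^×/F^{×p}` induced by the norm `N_{K/F}`. -/
def normJ (p : ℕ) (F K : Type) [Field F] [Field K] [Algebra F K] :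
    Jmod p K →* Jmod p F :=
  QuotientGroup.map _ _ (Units.map (Algebra.norm F : K →* F)) (by
    rintro x ⟨y, rfl⟩
    exact ⟨Units.map (Algebra.norm F : K →* F) y, by simp [powMonoidHom, map_pow]⟩)

end

open Module Finset IntermediateField

section Cyclic

variable {F K : Type*} [Field F] [Field K] [Algebra F K] [FiniteDimensional F K] [IsGalois F K]
  {σ : K ≃ₐ[F] K}

theorem algebraMap_norm_eq_prod_range_pow (hσ : ∀ η, η ∈ Subgroup.zpowers σ) (x : K) :
    algebraMap F K (Algebra.norm F x) = ∏ k ∈ range (finrank F K), (σ ^ k) x := by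
  classical
  rw [Algebra.norm_eq_prod_automorphisms, ← IsGalois.card_aut_eq_finrank,
    ← IsCyclic.image_range_card hσ, prod_image]
  intro i hi j hj hij
  rw [← orderOf_eq_card_of_forall_mem_zpowers hσ] at hi hj
  exact pow_injOn_Iio_orderOf (by simpa using hi) (by simpa using hj) hij

theorem mem_range_algebraMap_of_apply_eq (hσ : ∀ η, η ∈ Subgroup.zpowers σ) {x : K}
    (hx : σ x = x) : x ∈ Set.range (algebraMap F K) := by
  refine (IsGalois.mem_range_algebraMap_iff_fixed x).2 fun η => ?_
  have : Subgroup.zpowers σ ≤ MulAction.stabilizer (K ≃ₐ[F] K) x :=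
    Subgroup.zpowers_le.2 hx
  exact this (hσ η)

theorem exists_pow_eq_algebraMap_norm (hσ : ∀ η, η ∈ Subgroup.zpowers σ) {u v : K}
    (huv : σ u = u * v ^ finrank F K) :
    ∃ y : K, y ^ finrank F K = algebraMap F K (Algebra.norm F u) ∧
      σ y = algebraMap F K (Algebra.norm F v) * y := by
  set n := finrank F K
  set c : ℕ → K := fun k => ∏ i ∈ range k, (σ ^ i) v
  have hσc (k : ℕ) : σ (c k) * v = c (k + 1) := by
    simp only [c, map_prod, prod_range_succ', pow_zero, AlgEquiv.one_apply, ← AlgEquiv.mul_apply,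
      ← pow_succ']
  have hσu (k : ℕ) : (σ ^ k) u = u * c k ^ n := by
    induction k with
    | zero => simp [c]
    | succ k ih => rw [pow_succ', AlgEquiv.mul_apply, ih, map_mul, huv, map_pow, ← hσc]; ring
  refine ⟨u * ∏ k ∈ range n, c k, ?_, ?_⟩
  · rw [algebraMap_norm_eq_prod_range_pow hσ, prod_congr rfl fun k _ => hσu k, prod_mul_distrib,
      prod_const, card_range, prod_pow, mul_pow]
  · have hcn : c n = algebraMap F K (Algebra.norm F v) :=
      (algebraMap_norm_eq_prod_range_pow hσ v).symm
    calc σ (u * ∏ k ∈ range n, c k) = u * ∏ k ∈ range n, (σ (c k) * v) := by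
          rw [map_mul, huv, map_prod, prod_mul_distrib, prod_const, card_range]; ring
      _ = algebraMap F K (Algebra.norm F v) * (u * ∏ k ∈ range n, c k) := by
          rw [prod_congr rfl fun k _ => hσc k, ← hcn, mul_left_comm, mul_comm (c n),
            ← prod_range_succ, prod_range_succ', show c 0 = 1 from prod_range_zero _,
            mul_one]

end Cyclic

section Kummer

variable {p : ℕ} [hp : Fact p.Prime] {F K : Type*} [Field F] [Field K] [Algebra F K]
  {a : F} {α : K}

theorem notMem_range_algebraMap_of_adjoin_eq_top (hadj : F⟮α⟯ = ⊤) (hdeg : finrank F K = p) :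
    α ∉ Set.range (algebraMap F K) := fun hmem => by
  have hbot : (⊥ : IntermediateField F K) = ⊤ :=
    hadj ▸ (IntermediateField.adjoin_simple_eq_bot_iff.2 hmem).symm
  exact hp.out.ne_one (hdeg ▸ IntermediateField.bot_eq_top_iff_finrank_eq_one.1 hbot)

theorem ne_zero_of_adjoin_eq_top (hadj : F⟮α⟯ = ⊤) (hdeg : finrank F K = p) : α ≠ 0 := by
  rintro rfl
  exact notMem_range_algebraMap_of_adjoin_eq_top hadj hdeg ⟨0, map_zero _⟩

variable [FiniteDimensional F K]

theorem isGalois_of_pow_eq_algebraMap {ξ : F} (hξ : IsPrimitiveRoot ξ p)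
    (hα : α ^ p = algebraMap F K a) (hadj : F⟮α⟯ = ⊤) (hdeg : finrank F K = p) :
    IsGalois F K := by
  subst hdeg
  have hroots : (primitiveRoots (finrank F K) F).Nonempty :=
    ⟨ξ, (mem_primitiveRoots hp.out.pos).2 hξ⟩
  have := (isCyclic_tfae F K hroots).out 2 0
  exact (this.1 ⟨α, ⟨a, hα.symm⟩, hadj⟩).1

variable [IsGalois F K] {σ : K ≃ₐ[F] K}

theorem isPrimitiveRoot_apply_div_self (hσ : ∀ η, η ∈ Subgroup.zpowers σ)
    (hα : α ^ p = algebraMap F K a) (hadj : F⟮α⟯ = ⊤) (hdeg : finrank F K = p) :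
    IsPrimitiveRoot (σ α / α) p := by
  have hα_notMem := notMem_range_algebraMap_of_adjoin_eq_top hadj hdeg
  have hα0 := ne_zero_of_adjoin_eq_top (F := F) hadj hdeg
  refine IsPrimitiveRoot.iff_orderOf.2 (orderOf_eq_prime ?_ ?_)
  · rw [div_pow, ← map_pow, hα, AlgEquiv.commutes, ← hα, div_self (pow_ne_zero _ hα0)]
  · intro h
    exact hα_notMem (mem_range_algebraMap_of_apply_eq hσ ((div_eq_one_iff_eq hα0).1 h))

theorem exists_eq_algebraMap_mul_pow (hσ : ∀ η, η ∈ Subgroup.zpowers σ)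
    (hα : α ^ p = algebraMap F K a) (hadj : F⟮α⟯ = ⊤) (hdeg : finrank F K = p)
    {y : K} (hy : y ≠ 0) (hyp : y ^ p ∈ Set.range (algebraMap F K)) :
    ∃ (h : Fˣ) (e : ℕ), y = algebraMap F K h * α ^ e := by
  have hζ := isPrimitiveRoot_apply_div_self hσ hα hadj hdeg
  set ζ := σ α / α
  have hα0 := ne_zero_of_adjoin_eq_top (F := F) hadj hdeg
  have : NeZero p := ⟨hp.out.ne_zero⟩
  obtain ⟨b, hb⟩ := hyp
  have hσy_root : (σ y / y) ^ p = 1 := by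
    rw [div_pow, ← map_pow, ← hb, AlgEquiv.commutes, hb, div_self (pow_ne_zero _ hy)]
  obtain ⟨e, -, he⟩ := hζ.eq_pow_of_pow_eq_one hσy_root
  have hσα : σ α = ζ * α := (div_mul_cancel₀ _ hα0).symm
  have hσy : σ y = ζ ^ e * y := by rw [he, div_mul_cancel₀ _ hy]
  have hfixed : σ (y / α ^ e) = y / α ^ e := by
    rw [map_div₀, map_pow, hσy, hσα, mul_pow,
      mul_div_mul_left _ _ (pow_ne_zero _ (hζ.ne_zero hp.out.ne_zero))]
  obtain ⟨h, hh⟩ := mem_range_algebraMap_of_apply_eq hσ hfixed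
  have h0 : h ≠ 0 := by
    rintro rfl
    exact div_ne_zero hy (pow_ne_zero _ hα0) (by rw [← hh, map_zero])
  exact ⟨Units.mk0 h h0, e, by rw [Units.val_mk0, hh, div_mul_cancel₀ _ (pow_ne_zero _ hα0)]⟩

end Kummer

section Jmod

variable {p : ℕ} {F K : Type} [Field F] [Field K] [Algebra F K]

theorem mkJ_eq_one_iff {u : Kˣ} : mkJ p K u = 1 ↔ ∃ v : Kˣ, v ^ p = u :=
  QuotientGroup.eq_one_iff _

theorem mkJ_pow_self (v : Kˣ) : mkJ p K (v ^ p) = 1 :=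
  mkJ_eq_one_iff.2 ⟨v, rfl⟩

theorem Jmod.pow_eq_one (x : Jmod p K) : x ^ p = 1 := by
  obtain ⟨u, rfl⟩ := QuotientGroup.mk'_surjective _ x
  exact (map_pow (mkJ p K) u p).symm.trans (mkJ_pow_self u)

theorem epsJ_mkJ (f : Fˣ) :
    epsJ p F K (mkJ p F f) = mkJ p K (Units.map (algebraMap F K).toMonoidHom f) := rfl

theorem normJ_mkJ (u : Kˣ) :
    normJ p F K (mkJ p K u) = mkJ p F (Units.map (Algebra.norm F : K →* F) u) := rfl

theorem normJ_epsJ (x : Jmod p F) : normJ p F K (epsJ p F K x) = x ^ finrank F K := by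
  obtain ⟨f, rfl⟩ := QuotientGroup.mk'_surjective _ x
  rw [← mkJ, epsJ_mkJ, normJ_mkJ, ← map_pow]
  congr 1
  ext
  simp [Algebra.norm_algebraMap]

theorem exists_apply_eq_mul_pow_of_rhoJ_eq_one {σ : K ≃ₐ[F] K} {u : Kˣ}
    (h : rhoJ p K F σ (mkJ p K u) = 1) : ∃ v : Kˣ, σ u = u * v ^ p := by
  obtain ⟨v, hv⟩ := mkJ_eq_one_iff.1 (h : mkJ p K (sigU p K F σ u * u⁻¹) = 1)
  refine ⟨v, ?_⟩
  have := congrArg Units.val (eq_mul_inv_iff_mul_eq.1 hv)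
  simpa [sigU, mul_comm] using this.symm

end Jmod

theorem mem_range_algebraMap_of_pow_eq_algebraMap_pow {F K : Type*} [Field F] [Field K]
    [Algebra F K] {n : ℕ} [NeZero n] {ξ : F} (hξ : IsPrimitiveRoot ξ n) {y : K} {g : F}
    (hg : g ≠ 0) (hy : y ^ n = algebraMap F K g ^ n) : y ∈ Set.range (algebraMap F K) := by
  have hg' : algebraMap F K g ≠ 0 := (map_ne_zero _).2 hg
  have hroot : (y / algebraMap F K g) ^ n = 1 := by rw [div_pow, hy, div_self (pow_ne_zero _ hg')]
  obtain ⟨i, -, hi⟩ := (hξ.map_of_injective (algebraMap F K).injective).eq_pow_of_pow_eq_one hroot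
  exact ⟨g * ξ ^ i, by rw [map_mul, map_pow, hi, mul_div_cancel₀ _ hg']⟩

section KummerJmod

variable {p : ℕ} [hp : Fact p.Prime] {F K : Type} [Field F] [Field K] [Algebra F K]
  [FiniteDimensional F K] [IsGalois F K] {σ : K ≃ₐ[F] K}

theorem mkJ_mem_zpowers_of_algebraMap_eq_pow {a : Fˣ} {α : K}
    (hσ : ∀ η, η ∈ Subgroup.zpowers σ) (hα : α ^ p = algebraMap F K a) (hadj : F⟮α⟯ = ⊤)
    (hdeg : finrank F K = p) {f : Fˣ} {y : K} (hy : algebraMap F K f = y ^ p) :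
    mkJ p F f ∈ Subgroup.zpowers (mkJ p F a) := by
  have hy0 : y ≠ 0 := by
    rintro rfl
    rw [zero_pow hp.out.ne_zero, map_eq_zero] at hy
    exact f.ne_zero hy
  obtain ⟨h, e, rfl⟩ := exists_eq_algebraMap_mul_pow hσ hα hadj hdeg hy0 ⟨f, hy⟩
  have hf : f = h ^ p * a ^ e := by
    ext
    apply (algebraMap F K).injective
    rw [hy, Units.val_mul, Units.val_pow_eq_pow_val, Units.val_pow_eq_pow_val, map_mul, map_pow,
      map_pow, ← hα, mul_pow, ← pow_mul, ← pow_mul, mul_comm e p]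
  rw [hf, map_mul, mkJ_pow_self, one_mul, map_pow]
  exact Subgroup.npow_mem_zpowers _ e

theorem epsJ_eq_one_iff_mem_zpowers {a : Fˣ} {α : K}
    (hσ : ∀ η, η ∈ Subgroup.zpowers σ) (hα : α ^ p = algebraMap F K a) (hadj : F⟮α⟯ = ⊤)
    (hdeg : finrank F K = p) (x : Jmod p F) :
    epsJ p F K x = 1 ↔ x ∈ Subgroup.zpowers (mkJ p F a) := by
  constructor
  · obtain ⟨f, rfl⟩ := QuotientGroup.mk'_surjective _ x
    intro hf
    obtain ⟨y, hy⟩ := mkJ_eq_one_iff.1 hf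
    exact mkJ_mem_zpowers_of_algebraMap_eq_pow hσ hα hadj hdeg (congrArg Units.val hy).symm
  · rintro ⟨n, rfl⟩
    have hα0 : α ≠ 0 := ne_zero_of_adjoin_eq_top hadj hdeg
    have ha : epsJ p F K (mkJ p F a) = 1 :=
      mkJ_eq_one_iff.2 ⟨Units.mk0 α hα0, Units.ext hα⟩
    simp only [map_zpow, ha, one_zpow]

theorem normJ_mem_zpowers_of_rhoJ_eq_one {a : Fˣ} {α : K}
    (hσ : ∀ η, η ∈ Subgroup.zpowers σ) (hα : α ^ p = algebraMap F K a) (hadj : F⟮α⟯ = ⊤)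
    (hdeg : finrank F K = p) {u : Kˣ} (hu : rhoJ p K F σ (mkJ p K u) = 1) :
    normJ p F K (mkJ p K u) ∈ Subgroup.zpowers (mkJ p F a) := by
  obtain ⟨v, hv⟩ := exists_apply_eq_mul_pow_of_rhoJ_eq_one hu
  obtain ⟨y, hy, -⟩ := exists_pow_eq_algebraMap_norm hσ (hdeg ▸ hv)
  exact mkJ_mem_zpowers_of_algebraMap_eq_pow hσ hα hadj hdeg (hdeg ▸ hy.symm)

omit hp in
theorem exists_mkJ_eq_epsJ_of_norm_eq_one (hσ : ∀ η, η ∈ Subgroup.zpowers σ) {u v : Kˣ}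
    (huv : σ u = u * v ^ p) (hv : Algebra.norm F (v : K) = 1) :
    ∃ f : Fˣ, mkJ p K u = epsJ p F K (mkJ p F f) := by
  have : IsCyclic (K ≃ₐ[F] K) := ⟨σ, hσ⟩
  obtain ⟨β, hβ⟩ := groupCohomology.exists_div_of_norm_eq_one hσ hv
  have hσβ : σ β ≠ 0 := (map_ne_zero σ).2 β.ne_zero
  have hfixed : σ (u * β ^ p : K) = u * β ^ p := by
    rw [map_mul, map_pow, huv, ← hβ, mul_assoc, ← mul_pow, div_mul_cancel₀ _ hσβ]
  obtain ⟨f, hf⟩ := mem_range_algebraMap_of_apply_eq hσ hfixed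
  have hf0 : f ≠ 0 := by
    rintro rfl
    exact mul_ne_zero u.ne_zero (pow_ne_zero _ β.ne_zero) (by rw [← hf, map_zero])
  refine ⟨Units.mk0 f hf0, ?_⟩
  have hfu : Units.map (algebraMap F K).toMonoidHom (Units.mk0 f hf0) = u * β ^ p := Units.ext hf
  rw [epsJ_mkJ, hfu, map_mul, mkJ_pow_self, mul_one]

theorem normJ_eq_one_iff_exists_eq_epsJ {ξ : F} (hξ : IsPrimitiveRoot ξ p)
    (hσ : ∀ η, η ∈ Subgroup.zpowers σ) (hdeg : finrank F K = p) {u : Kˣ}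
    (hu : rhoJ p K F σ (mkJ p K u) = 1) :
    normJ p F K (mkJ p K u) = 1 ↔ ∃ f : Fˣ, mkJ p K u = epsJ p F K (mkJ p F f) := by
  refine ⟨fun h => ?_, fun ⟨f, hf⟩ => by rw [hf, normJ_epsJ, hdeg, Jmod.pow_eq_one]⟩
  have : NeZero p := ⟨hp.out.ne_zero⟩
  obtain ⟨v, hv⟩ := exists_apply_eq_mul_pow_of_rhoJ_eq_one hu
  obtain ⟨y, hy, hσy⟩ := exists_pow_eq_algebraMap_norm hσ (hdeg ▸ hv)
  obtain ⟨g, hg⟩ := mkJ_eq_one_iff.1 h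
  have hyg : y ^ p = algebraMap F K g ^ p := by
    rw [← hdeg, hy, ← map_pow, hdeg]
    exact congrArg _ (congrArg Units.val hg).symm
  have hy0 : y ≠ 0 := fun hy0 => by
    rw [hy0, zero_pow hp.out.ne_zero] at hyg
    exact pow_ne_zero _ ((map_ne_zero _).2 g.ne_zero) hyg.symm
  obtain ⟨c, rfl⟩ := mem_range_algebraMap_of_pow_eq_algebraMap_pow hξ g.ne_zero hyg
  have hv1 : Algebra.norm F (v : K) = 1 := by
    rw [AlgEquiv.commutes] at hσy
    apply (algebraMap F K).injective
    rw [map_one]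
    exact (mul_eq_right₀ hy0).1 hσy.symm
  exact exists_mkJ_eq_epsJ_of_norm_eq_one hσ hv hv1

end KummerJmod

/-- Exactness of `0 → ⟨[a]⟩ → F^×/F^{×p} → J₁ → ⟨[a]⟩`, where the second map `ε` is induced
by the inclusion `F^× ⊆ K^×`, `J₁` is the `G`-fixed part of `J = K^×/K^{×p}`, and the last
map is induced by the norm: (1) `ker ε = ⟨[a]⟩`; (2) the norm carries `J₁` into `⟨[a]⟩`;
(3) for `x ∈ J₁`, `N(x) = 1` iff `x` lies in the image of `ε`.  Consequently, if
`[γ] ∈ J₁` and `N_{K/F}(γ) ∈ a^{pℤ}·F^{×p}`, then `[γ] = [f]` for some `f ∈ F^×`. -/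
theorem stmt_12 (p : ℕ) [Fact p.Prime]
    (F K : Type) [Field F] [Field K] [Algebra F K]
    (xi : F) (hxi : IsPrimitiveRoot xi p)
    (a : Fˣ) (alpha : K) (halpha : alpha ^ p = algebraMap F K a)
    (hadj : Algebra.adjoin F {alpha} = ⊤)
    (hdeg : Module.finrank F K = p)
    (sigma : K ≃ₐ[F] K) (hgen : ∀ eta : K ≃ₐ[F] K, eta ∈ Subgroup.zpowers sigma) :
    (∀ x : Jmod p F, epsJ p F K x = 1 ↔ x ∈ Subgroup.zpowers (mkJ p F a)) ∧
    (∀ u : Kˣ, rhoJ p K F sigma (mkJ p K u) = 1 →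
      normJ p F K (mkJ p K u) ∈ Subgroup.zpowers (mkJ p F a)) ∧
    (∀ u : Kˣ, rhoJ p K F sigma (mkJ p K u) = 1 →
      (normJ p F K (mkJ p K u) = 1 ↔ ∃ f : Fˣ, mkJ p K u = epsJ p F K (mkJ p F f))) ∧
    (∀ γ : Kˣ, rhoJ p K F sigma (mkJ p K γ) = 1 →
      (∃ (s : ℤ) (g : Fˣ),
          Units.map (Algebra.norm F : K →* F) γ = a ^ ((p : ℤ) * s) * g ^ p) →
      ∃ f : Fˣ, mkJ p K γ = mkJ p K (Units.map (algebraMap F K).toMonoidHom f)) := by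
  have : FiniteDimensional F K :=
    Module.finite_of_finrank_pos (hdeg ▸ (Fact.out : p.Prime).pos)
  have hadj' : F⟮alpha⟯ = ⊤ := IntermediateField.adjoin_eq_top_iff.2 hadj
  have : IsGalois F K := isGalois_of_pow_eq_algebraMap hxi halpha hadj' hdeg
  have hnorm u (hu : rhoJ p K F sigma (mkJ p K u) = 1) :=
    normJ_eq_one_iff_exists_eq_epsJ hxi hgen hdeg hu
  refine ⟨epsJ_eq_one_iff_mem_zpowers hgen halpha hadj' hdeg,
    fun u hu => normJ_mem_zpowers_of_rhoJ_eq_one hgen halpha hadj' hdeg hu, hnorm, ?_⟩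
  rintro γ hγ ⟨s, g, hγg⟩
  have hγ1 : normJ p F K (mkJ p K γ) = 1 := by
    rw [normJ_mkJ, hγg, mul_comm (p : ℤ) s, zpow_mul, zpow_natCast, ← mul_pow, mkJ_pow_self]
  exact (hnorm γ hγ).1 hγ1
end
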